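/- Let g̃(u) = max_{i ∈ {1,...,K}} u_i on ℝ^K and ζ > 0. If s ∈ ℝ satisfies Σ_{i=1}^K max(u_i - s, 0) = ζ, then the vector with components min(u_i, s) is the proximity operator prox_{ζ g̃}(u). -/

import Mathlib

/-- The set of minimizers defining the proximity operator of `p` at `u`. -/
def proxSet {n : ℕ} (p : (Fin n → ℝ) → ℝ) (u : Fin n → ℝ) : Set (Fin n → ℝ) :=
  {x | ∀ y, p x + (1/2) * ∑ i, (u i - x i)^2 ≤ p y + (1/2) * ∑ i, (u i - y i)^2}

/-!
With `v = min u s` the residual `u - v = max (u - s) 0` is nonnegative, sums to `ζ`, and is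
supported where `v` attains its maximum `s`. Such a vector is a subgradient of `ζ • max` at `v`,
which is exactly the optimality condition `u - v ∈ ζ ∂(max)(v)` for `v = prox_{ζ max}(u)`.
-/

theorem proxSet_eq_singleton_of_subgradient {n : ℕ} {p : (Fin n → ℝ) → ℝ} {u v : Fin n → ℝ}
    (hsub : ∀ y, ∑ i, (u i - v i) * (y i - v i) ≤ p y - p v) :
    proxSet p u = {v} := by
  have key : ∀ y, p v + (1/2) * ∑ i, (u i - v i)^2 + (1/2) * ∑ i, (y i - v i)^2
      ≤ p y + (1/2) * ∑ i, (u i - y i)^2 := by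
    intro y
    have hexpand : ∑ i, (u i - y i)^2 = ∑ i, (u i - v i)^2 + ∑ i, (y i - v i)^2
        - 2 * ∑ i, (u i - v i) * (y i - v i) := by
      rw [Finset.mul_sum, ← Finset.sum_add_distrib, ← Finset.sum_sub_distrib]
      exact Finset.sum_congr rfl fun i _ => by ring
    linarith [hsub y]
  have hsq_nonneg : ∀ y : Fin n → ℝ, 0 ≤ ∑ i, (y i - v i)^2 := fun y =>
    Finset.sum_nonneg fun i _ => sq_nonneg _
  ext x
  simp only [proxSet, Set.mem_ofPred_eq, Set.mem_singleton_iff]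
  constructor
  · intro hx
    have hzero : ∑ i, (x i - v i)^2 = 0 :=
      le_antisymm (by linarith [hx v, key x]) (hsq_nonneg x)
    funext i
    have hi := (Finset.sum_eq_zero_iff_of_nonneg fun j _ => sq_nonneg (x j - v j)).1 hzero i
      (Finset.mem_univ i)
    exact sub_eq_zero.1 (pow_eq_zero_iff two_ne_zero |>.1 hi)
  · rintro rfl y
    linarith [key y, hsq_nonneg y]

/-- `w` is a subgradient of `(∑ i, w i) • max` at `v`. -/
theorem sum_mul_sub_le_mul_iSup_sub {ι : Type*} [Fintype ι] {v w : ι → ℝ}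
    (hw : ∀ i, 0 ≤ w i) (hsupp : ∀ i, w i ≠ 0 → v i = ⨆ j, v j) (y : ι → ℝ) :
    ∑ i, w i * (y i - v i) ≤ (∑ i, w i) * ((⨆ i, y i) - ⨆ i, v i) := by
  rw [Finset.sum_mul]
  refine Finset.sum_le_sum fun i _ => ?_
  by_cases hwi : w i = 0
  · simp [hwi]
  · rw [← hsupp i hwi]
    exact mul_le_mul_of_nonneg_left (by linarith [Finite.le_ciSup y i]) (hw i)

theorem iSup_min_eq_of_le {ι : Type*} [Finite ι] {u : ι → ℝ} {s : ℝ} {i : ι} (hi : s ≤ u i) :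
    ⨆ j, min (u j) s = s := by
  have : Nonempty ι := ⟨i⟩
  refine le_antisymm (ciSup_le fun j => min_le_right _ _) ?_
  calc s = min (u i) s := (min_eq_right hi).symm
    _ ≤ ⨆ j, min (u j) s := Finite.le_ciSup (fun j => min (u j) s) i

theorem sub_min_eq_max_sub (a s : ℝ) : a - min a s = max (a - s) 0 := by
  rcases le_total a s with h | h
  · simp [min_eq_left h, max_eq_right (sub_nonpos.2 h)]
  · simp [min_eq_right h, max_eq_left (sub_nonneg.2 h)]

theorem prox_of_max_function_general (K : ℕ) (ζ : ℝ)
    (u : Fin K → ℝ) (s : ℝ) (hs : ∑ i, max (u i - s) 0 = ζ) :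
    proxSet (fun x => ζ * ⨆ i, x i) u = {fun i => min (u i) s} := by
  refine proxSet_eq_singleton_of_subgradient fun y => ?_
  have hsupp : ∀ i, u i - min (u i) s ≠ 0 → min (u i) s = ⨆ j, min (u j) s := by
    intro i hi
    have hsi : s ≤ u i := by
      by_contra! h
      exact hi (by rw [sub_min_eq_max_sub, max_eq_right (by linarith)])
    rw [iSup_min_eq_of_le hsi, min_eq_right hsi]
  have hsub := sum_mul_sub_le_mul_iSup_sub (fun i => sub_nonneg.2 (min_le_left (u i) s)) hsupp y
  simp only [sub_min_eq_max_sub, hs, mul_sub] at hsub ⊢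
  exact hsub

theorem prox_of_max_function (K : ℕ) [NeZero K] (ζ : ℝ) (hζ : 0 < ζ)
    (u : Fin K → ℝ) (s : ℝ) (hs : ∑ i, max (u i - s) 0 = ζ) :
    proxSet (fun x => ζ * ⨆ i, x i) u = {fun i => min (u i) s} :=
  prox_of_max_function_general K ζ u s hs
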